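/- arXiv:1502.07283 — 5 statements merged into one kernel-verified Lean document; each statement's English description precedes it below -/
import Mathlib

section
/- Let G be a group and H a weakly maximal subgroup of G. If γ ∈ G \ H is an element of finite order, then γ H γ⁻¹ ≠ H. -/
/-!
If `γ` normalises `H`, the second isomorphism theorem identifies `(⟨γ⟩ ⊔ H) / H` with a
quotient of the finite cyclic group `⟨γ⟩`, so `H` has finite index in `⟨γ⟩ ⊔ H`. As `γ ∉ H`,
this subgroup strictly contains `H` and so has finite index by weak maximality; then so would `H`.
-/

/-- A subgroup `H` of a group `G` is weakly maximal if it has infinite index and every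
subgroup strictly containing it has finite index. -/
def IsWeaklyMaximal {G : Type*} [Group G] (H : Subgroup G) : Prop :=
  H.index = 0 ∧ ∀ M : Subgroup G, H < M → M.index ≠ 0

namespace Subgroup

variable {G : Type*} [Group G]

theorem relIndex_sup_of_le_normalizer {H N : Subgroup G} (hLE : H ≤ normalizer (N : Set G)) :
    N.relIndex (H ⊔ N) = N.relIndex H := by
  have := normal_subgroupOf_of_le_normalizer hLE
  have := normal_subgroupOf_sup_of_le_normalizer hLE
  exact Nat.card_congr (QuotientGroup.quotientInfEquivProdNormalizerQuotient H N hLE).toEquiv.symm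

theorem relIndex_zpowers_sup_ne_zero {H : Subgroup G} {g : G} (hg : g ∈ normalizer (H : Set G))
    (hfin : IsOfFinOrder g) : H.relIndex (zpowers g ⊔ H) ≠ 0 := by
  rw [relIndex_sup_of_le_normalizer (zpowers_le.mpr hg)]
  have : Finite (zpowers g) := hfin.finite_zpowers.to_subtype
  exact index_ne_zero_of_finite

end Subgroup

theorem IsWeaklyMaximal.eq_of_le_of_relIndex_ne_zero {G : Type*} [Group G] {H K : Subgroup G}
    (hH : IsWeaklyMaximal H) (hHK : H ≤ K) (hrel : H.relIndex K ≠ 0) : K = H := by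
  by_contra hne
  have hK := hH.2 K (lt_of_le_of_ne hHK (Ne.symm hne))
  exact mul_ne_zero hrel hK (hH.1 ▸ H.relIndex_mul_index hHK)

theorem conj_ne_of_weaklyMaximal {G : Type*} [Group G] (H : Subgroup G)
    (hH : IsWeaklyMaximal H) (γ : G) (hγH : γ ∉ H) (hord : IsOfFinOrder γ) :
    Subgroup.map (MulAut.conj γ).toMonoidHom H ≠ H := by
  intro hconj
  have hγ : γ ∈ Subgroup.normalizer (H : Set G) :=
    Subgroup.mem_normalizer_iff_map_conj_eq.mpr hconj
  have hK := hH.eq_of_le_of_relIndex_ne_zero le_sup_right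
    (Subgroup.relIndex_zpowers_sup_ne_zero hγ hord)
  exact hγH (hK ▸ Subgroup.mem_sup_left (Subgroup.mem_zpowers γ))
end

section
/- Let G be a just infinite group, let p be a prime and n ≥ 1 an integer, and suppose G contains an element of order p^n. Then for every weakly maximal subgroup H of G, the set of conjugates {g H g⁻¹ : g ∈ G} contains at least p^n distinct subgroups. -/
/-- A group is just infinite if every nontrivial normal subgroup has finite index. -/
def IsJustInfinite (G : Type*) [Group G] : Prop :=
  ∀ N : Subgroup G, N.Normal → N ≠ ⊥ → N.index ≠ 0

/-!
As `H` has infinite index and `G` is just infinite, the normal core of `H` is trivial, so some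
conjugate `K` of `H` misses the element `z = γ ^ p ^ (n - 1)` of order `p`. An element of finite
order normalising the weakly maximal subgroup `K` lies in `K`, since `K` has finite index in the
subgroup the two generate. So a power of `γ` normalising `K` lies in `K`, hence is trivial: every
nontrivial subgroup of the cyclic `p`-group `⟨γ⟩` contains `z`. Thus the conjugates `γ ^ i • K`,
`i < p ^ n`, are pairwise distinct.
-/

open Subgroup Pointwise

section

variable {G : Type*} [Group G]

theorem Subgroup.relIndex_ne_zero_of_finite {H K : Subgroup G} [Finite K] : H.relIndex K ≠ 0 :=
  have : Finite (K ⧸ H.subgroupOf K) := Quotient.finite _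
  index_ne_zero_of_finite

theorem Subgroup.relIndex_sup_ne_zero_of_le_normalizer {K B : Subgroup G} [Finite B]
    (hB : B ≤ normalizer (K : Set G)) : K.relIndex (K ⊔ B) ≠ 0 := by
  have : Finite (B.subgroupOf (normalizer (K : Set G))) :=
    Finite.of_equiv _ (subgroupOfEquivOfLe hB).toEquiv.symm
  rw [← relIndex_subgroupOf (sup_le le_normalizer hB), subgroupOf_sup le_normalizer hB,
    relIndex_sup_left]
  exact relIndex_ne_zero_of_finite

theorem pow_prime_pow_pred_mem_zpowers {p n : ℕ} (hp : p.Prime)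
    {γ x : G} (hγ : orderOf γ = p ^ n) (hx : x ∈ zpowers γ) (hx1 : x ≠ 1) :
    γ ^ p ^ (n - 1) ∈ zpowers x := by
  have hγfin : IsOfFinOrder γ := orderOf_pos_iff.mp (hγ ▸ pow_pos hp.pos n)
  obtain ⟨k, rfl⟩ := (Submonoid.mem_powers_iff _ _).mp (hγfin.mem_powers_iff_mem_zpowers.mpr hx)
  have hk : k ≠ 0 := by rintro rfl; exact hx1 (pow_zero γ)
  obtain ⟨e, u, hpu, rfl⟩ := Nat.exists_eq_pow_mul_and_not_dvd hk p hp.one_lt.ne'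
  have hen : e < n := by
    by_contra! hne
    refine hx1 (orderOf_dvd_iff_pow_eq_one.mp ?_)
    rw [hγ]
    exact (pow_dvd_pow p hne).trans (dvd_mul_right _ _)
  set y := γ ^ p ^ e
  have hy : orderOf y = p ^ (n - e) := by
    rw [orderOf_pow_of_dvd (pow_ne_zero _ hp.ne_zero) (hγ ▸ pow_dvd_pow p hen.le), hγ,
      Nat.pow_div hen.le hp.pos]
  have hyx : y ∈ zpowers (y ^ u) := by
    rw [mem_zpowers_pow_iff, hy]
    exact Nat.Coprime.pow_right _ (hp.coprime_iff_not_dvd.mpr hpu).symm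
  have hγy : γ ^ p ^ (n - 1) = y ^ p ^ (n - 1 - e) := by
    rw [← pow_mul, ← pow_add, Nat.add_sub_cancel' (by omega)]
  rw [hγy, show γ ^ (p ^ e * u) = y ^ u from pow_mul γ _ _]
  exact pow_mem hyx _

theorem Subgroup.injOn_toConjAct_pow_smul {K : Subgroup G} {γ : G}
    (h : normalizer (K : Set G) ⊓ zpowers γ = ⊥) :
    Set.InjOn (fun i : ℕ => ConjAct.toConjAct (γ ^ i) • K) (Set.Iio (orderOf γ)) := by
  intro i hi j hj hij
  refine pow_injOn_Iio_orderOf hi hj ?_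
  have hmem : (γ ^ j)⁻¹ * γ ^ i ∈ normalizer (K : Set G) ⊓ zpowers γ := by
    refine mem_inf.mpr ⟨conjAct_pointwise_smul_iff.mp ?_,
      mul_mem (inv_mem (npow_mem_zpowers γ j)) (npow_mem_zpowers γ i)⟩
    rw [map_mul, map_inv, mul_smul, inv_smul_eq_iff]
    exact hij
  rw [h, mem_bot, inv_mul_eq_one] at hmem
  exact hmem.symm

theorem IsJustInfinite.normalCore_eq_bot (hG : IsJustInfinite G) {H : Subgroup G}
    (hH : H.index = 0) : H.normalCore = ⊥ := by
  by_contra hne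
  exact hG _ inferInstance hne (zero_dvd_iff.mp (hH ▸ index_dvd_of_le H.normalCore_le))

theorem IsWeaklyMaximal.smul {α : Type*} [Group α] [MulDistribMulAction α G] {H : Subgroup G}
    (hH : IsWeaklyMaximal H) (a : α) : IsWeaklyMaximal (a • H) := by
  have index_smul (b : α) (M : Subgroup G) : (b • M).index = M.index :=
    index_map_equiv M (MulDistribMulAction.toMulEquiv G b)
  refine ⟨(index_smul a H).trans hH.1, fun M hM => ?_⟩
  have hlt : H < a⁻¹ • M := lt_of_le_of_ne (pointwise_smul_subset_iff.mp hM.le)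
    (by rintro rfl; exact hM.ne (smul_inv_smul a M))
  rw [← smul_inv_smul a M, index_smul]
  exact hH.2 _ hlt

theorem IsWeaklyMaximal.mem_of_mem_normalizer {K : Subgroup G} (hK : IsWeaklyMaximal K) {x : G}
    (hx : x ∈ normalizer (K : Set G)) (hfin : IsOfFinOrder x) : x ∈ K := by
  by_contra hxK
  have : Finite (zpowers x) := hfin.finite_zpowers.to_subtype
  have hlt : K < K ⊔ zpowers x := left_lt_sup.mpr (by rwa [zpowers_le])
  exact mul_ne_zero (relIndex_sup_ne_zero_of_le_normalizer (zpowers_le.mpr hx)) (hK.2 _ hlt)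
    ((relIndex_mul_index le_sup_left).trans hK.1)

end

theorem conjugacy_class_card_ge {G : Type*} [Group G] (hG : IsJustInfinite G)
    (p n : ℕ) (hp : p.Prime) (hn : 1 ≤ n) (γ : G) (hγ : orderOf γ = p ^ n)
    (H : Subgroup G) (hH : IsWeaklyMaximal H) :
    ∃ f : Fin (p ^ n) → Subgroup G, Function.Injective f ∧
      ∀ i, ∃ g : G, f i = Subgroup.map (MulAut.conj g).toMonoidHom H := by
  have hγfin : IsOfFinOrder γ := orderOf_pos_iff.mp (hγ ▸ pow_pos hp.pos n)
  have hz : γ ^ p ^ (n - 1) ≠ 1 := pow_ne_one_of_lt_orderOf (pow_ne_zero _ hp.ne_zero)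
    (hγ ▸ Nat.pow_lt_pow_right hp.one_lt (by omega))
  obtain ⟨g, hzg⟩ : ∃ g : ConjAct G, γ ^ p ^ (n - 1) ∉ g • H := by
    by_contra! h
    have hcore := hG.normalCore_eq_bot hH.1
    rw [normalCore_eq_iInf_conjAct] at hcore
    exact hz (mem_bot.mp (hcore ▸ mem_iInf.mpr h))
  have hK := hH.smul g
  have htriv : normalizer ((g • H : Subgroup G) : Set G) ⊓ zpowers γ = ⊥ := by
    refine eq_bot_iff.mpr fun x hx => mem_bot.mpr ?_
    by_contra hx1
    obtain ⟨hxN, hxγ⟩ := mem_inf.mp hx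
    exact hzg (zpowers_le.mpr (hK.mem_of_mem_normalizer hxN (hγfin.of_mem_zpowers hxγ))
      (pow_prime_pow_pred_mem_zpowers hp hγ hxγ hx1))
  have hlt (i : Fin (p ^ n)) : (i : ℕ) ∈ Set.Iio (orderOf γ) := by
    rw [Set.mem_Iio, hγ]; exact i.2
  refine ⟨fun i => ConjAct.toConjAct (γ ^ (i : ℕ)) • g • H,
    fun i j hij => Fin.ext (injOn_toConjAct_pow_smul htriv (hlt i) (hlt j) hij),
    fun i => ⟨γ ^ (i : ℕ) * ConjAct.ofConjAct g, ?_⟩⟩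
  change _ = ConjAct.toConjAct (γ ^ (i : ℕ) * ConjAct.ofConjAct g) • H
  rw [map_mul, mul_smul, ConjAct.toConjAct_ofConjAct]
end

section
/- Let G be a finitely generated group and H a subgroup of infinite index in G. Then there exists a weakly maximal subgroup W of G with H ≤ W. -/
/-!
Zorn's lemma on the subgroups of infinite index. The union of a nonempty chain of them again has
infinite index: if it had finite index, Schreier's lemma would make it finitely generated, hence a
compact element of the subgroup lattice, so it would already be a member of the chain.
-/

namespace Subgroup

variable {G : Type*} [Group G]

theorem isCompactElement_closure_singleton (g : G) : IsCompactElement (closure {g}) := by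
  rw [CompleteLattice.isCompactElement_iff_le_of_directed_sSup_le]
  intro s hne hdir hg
  obtain ⟨K, hKs, hgK⟩ := (mem_sSup_of_directedOn hne hdir).1 (hg (mem_closure_singleton_self g))
  exact ⟨K, hKs, closure_le K |>.2 (Set.singleton_subset_iff.2 hgK)⟩

theorem FG.isCompactElement {K : Subgroup G} (hK : K.FG) : IsCompactElement K := by
  obtain ⟨S, rfl⟩ := hK
  have : closure (S : Set G) = S.sup fun g => closure {g} := by
    conv_lhs => rw [← Set.biUnion_of_singleton (S : Set G)]
    simp only [closure_iUnion, Finset.mem_coe, Finset.sup_eq_iSup]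
  rw [this]
  exact CompleteLattice.isCompactElement_finsetSup S fun g _ => isCompactElement_closure_singleton g

theorem index_sSup_eq_zero_of_isChain [Group.FG G] {c : Set (Subgroup G)}
    (hc : IsChain (· ≤ ·) c) (hne : c.Nonempty) (hindex : ∀ K ∈ c, K.index = 0) :
    (sSup c).index = 0 := by
  by_contra hfinite
  have : (sSup c).FiniteIndex := ⟨hfinite⟩
  have hfg : (sSup c).FG := (Group.fg_iff_subgroup_fg _).1 (fg_of_index_ne_zero _)
  obtain ⟨K, hKc, hle⟩ := (CompleteLattice.isCompactElement_iff_le_of_directed_sSup_le _ _).1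
    hfg.isCompactElement c hne hc.directedOn le_rfl
  exact hfinite (le_antisymm (le_sSup hKc) hle ▸ hindex K hKc)

end Subgroup

theorem isWeaklyMaximal_iff_maximal {G : Type*} [Group G] {H : Subgroup G} :
    IsWeaklyMaximal H ↔ Maximal (fun K : Subgroup G => K.index = 0) H := by
  refine ⟨fun ⟨hH, hmax⟩ => ⟨hH, fun M hM hHM => ?_⟩, fun ⟨hH, hmax⟩ => ⟨hH, fun M hHM hM => ?_⟩⟩
  · by_contra hMH
    exact hmax M (lt_of_le_not_ge hHM hMH) hM
  · exact hHM.not_ge (hmax hM hHM.le)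

theorem exists_weaklyMaximal_of_infinite_index {G : Type*} [Group G]
    (hfg : Group.FG G) (H : Subgroup G) (hH : H.index = 0) :
    ∃ W : Subgroup G, IsWeaklyMaximal W ∧ H ≤ W := by
  obtain ⟨W, hHW, hW⟩ := zorn_le_nonempty₀ {K : Subgroup G | K.index = 0}
    (fun c hcs hc K hK => ⟨sSup c, Subgroup.index_sSup_eq_zero_of_isChain hc ⟨K, hK⟩ hcs,
      fun _ => le_sSup⟩) H hH
  exact ⟨W, isWeaklyMaximal_iff_maximal.2 hW, hHW⟩
end

section
/- Let G be a finitely generated group and let (H_i)_{i ∈ ℕ} be an increasing sequence of subgroups of G (H_i ≤ H_{i+1} for all i) such that each H_i has infinite index in G. Then the union H = ⋃_{i ∈ ℕ} H_i is a subgroup of infinite index in G. -/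
theorem union_of_chain_infinite_index {G : Type*} [Group G] (hfg : Group.FG G)
    (H : ℕ → Subgroup G) (hmono : ∀ i, H i ≤ H (i + 1))
    (hinf : ∀ i, (H i).index = 0) :
    ∃ W : Subgroup G, (W : Set G) = ⋃ i, (H i : Set G) ∧ W.index = 0 := by
  have hdir : Directed (· ≤ ·) H := (monotone_nat_of_le_succ hmono).directed_le
  refine ⟨⨆ i, H i, Subgroup.coe_iSup_of_directed hdir, ?_⟩
  by_contra h0
  haveI : (⨆ i, H i).FiniteIndex := ⟨h0⟩
  haveI : Group.FG (⨆ i, H i : Subgroup G) := Subgroup.fg_of_index_ne_zero _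
  obtain ⟨S, hScl, hSfin⟩ := (Subgroup.fg_iff _).mp ((Group.fg_iff_subgroup_fg _).mp this)
  lift S to Finset G using hSfin
  -- each element of S lies in some H i
  have hmem : ∀ s ∈ S, ∃ i, s ∈ H i := by
    intro s hs
    have : s ∈ (⨆ i, H i : Subgroup G) := hScl ▸ Subgroup.subset_closure hs
    exact (Subgroup.mem_iSup_of_directed hdir).mp this
  choose f hf using hmem
  set N := S.attach.sup fun s => f s.1 s.2 with hNdef
  have hsub : (S : Set G) ⊆ H N := by
    intro s hs
    have h1 : f s hs ≤ N := Finset.le_sup (f := fun s : {x // x ∈ S} => f s.1 s.2) (S.mem_attach ⟨s, hs⟩)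
    exact ((monotone_nat_of_le_succ hmono) h1) (hf s hs)
  have hle : (⨆ i, H i : Subgroup G) ≤ H N := by
    rw [← hScl, Subgroup.closure_le]; exact hsub
  have : (⨆ i, H i : Subgroup G) = H N := le_antisymm hle (le_iSup H N)
  exact h0 (this ▸ hinf N)
end

section
/- Let G ≤ Aut(T) be a regular branch group over K. Then for every n ∈ ℕ, the image of Stab_G(n) under ψ_n contains K^{d^n} = {(k_v)_v : each k_v ∈ K} and is a subgroup of finite index in G^{d^n} ≤ Aut(T)^{d^n}. -/
/-- Vertices of the `d`-regular rooted tree: finite words over `Fin d`. -/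
abbrev Vtx (d : ℕ) := List (Fin d)

/-- A permutation of the vertex set is a tree automorphism if it fixes the root and
maps children of a vertex to children of its image. -/
def IsTreeAut (d : ℕ) (g : Equiv.Perm (Vtx d)) : Prop :=
  g [] = [] ∧ ∀ (v : Vtx d) (x : Fin d), ∃ y : Fin d, g (v ++ [x]) = g v ++ [y]

/-- The initial raySegment of length `n` of a boundary point `ξ : ℕ → Fin d`. -/
def raySegment {d : ℕ} (ξ : ℕ → Fin d) (n : ℕ) : Vtx d := List.ofFn fun i : Fin n => ξ i

/-- The vertices at level `n`. -/
abbrev Level (d n : ℕ) := {v : Vtx d // v.length = n}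

/-- A group of tree automorphisms is spherically transitive if it acts transitively on
each level. -/
def SphericallyTransitive {d : ℕ} (G : Subgroup (Equiv.Perm (Vtx d))) : Prop :=
  ∀ u v : Vtx d, u.length = v.length → ∃ g ∈ G, g u = v

/-- A group of tree automorphisms is self-similar if all sections of its elements
belong to it. -/
def SelfSimilar {d : ℕ} (G : Subgroup (Equiv.Perm (Vtx d))) : Prop :=
  ∀ g ∈ G, ∀ v : Vtx d, ∃ h ∈ G, ∀ w : Vtx d, g (v ++ w) = g v ++ h w

/-- The image of `H ∩ Stab(n)` under the map `ψₙ` sending an automorphism fixing level `n`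
to the tuple of its sections at the vertices of level `n`. -/
def psiImage {d : ℕ} (H : Subgroup (Equiv.Perm (Vtx d))) (n : ℕ) :
    Subgroup (Level d n → Equiv.Perm (Vtx d)) where
  carrier := {h | ∃ g ∈ H, (∀ v : Level d n, g v.1 = v.1) ∧
      ∀ (v : Level d n) (w : Vtx d), g (v.1 ++ w) = v.1 ++ h v w}
  one_mem' := ⟨1, H.one_mem, fun _ => rfl, fun _ _ => rfl⟩
  mul_mem' := by
    rintro a b ⟨g, hg, hgf, hga⟩ ⟨g', hg', hg'f, hg'a⟩
    refine ⟨g * g', H.mul_mem hg hg', fun v => ?_, fun v w => ?_⟩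
    · rw [Equiv.Perm.mul_apply, hg'f v, hgf v]
    · rw [Equiv.Perm.mul_apply, hg'a v w, hga v (b v w)]; rfl
  inv_mem' := by
    rintro a ⟨g, hg, hgf, hga⟩
    refine ⟨g⁻¹, H.inv_mem hg, fun v => ?_, fun v w => ?_⟩
    · apply g.injective
      rw [Equiv.Perm.inv_def, Equiv.apply_symm_apply, hgf v]
    · apply g.injective
      rw [Equiv.Perm.inv_def, Equiv.apply_symm_apply, hga v (a⁻¹ v w)]
      show v.1 ++ w = v.1 ++ a v ((a v)⁻¹ w)
      rw [Equiv.Perm.inv_def, Equiv.apply_symm_apply]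

/-- `G ≤ Aut(T)` is regular branch over `K` if it consists of tree automorphisms, is
spherically transitive and self-similar, and `K ≤ G` is a finite-index subgroup such that
`ψ₁(K ∩ Stab(1))` contains `K^d` as a subgroup of finite index. -/
structure IsRegularBranch (d : ℕ) (G K : Subgroup (Equiv.Perm (Vtx d))) : Prop where
  treeAut : ∀ g ∈ G, IsTreeAut d g
  transitive : SphericallyTransitive G
  selfSimilar : SelfSimilar G
  le : K ≤ G
  relindex_ne_zero : K.relIndex G ≠ 0
  pi_le : Subgroup.pi Set.univ (fun _ : Level d 1 => K) ≤ psiImage K 1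
  pi_relindex_ne_zero :
    (Subgroup.pi Set.univ (fun _ : Level d 1 => K)).relIndex (psiImage K 1) ≠ 0

/-- `H` is a weakly maximal subgroup of (the subgroup) `G` if `H ≤ G`, `H` has infinite
index in `G`, and every subgroup of `G` strictly containing `H` has finite index in `G`. -/
def IsWeaklyMaximalIn {P : Type*} [Group P] (G H : Subgroup P) : Prop :=
  H ≤ G ∧ H.relIndex G = 0 ∧
    ∀ M : Subgroup P, M ≤ G → H < M → M.relIndex G ≠ 0

/-- The stabilizer in `G` of a boundary point `ξ` (a parabolic subgroup). -/
def rayStab {d : ℕ} (G : Subgroup (Equiv.Perm (Vtx d))) (ξ : ℕ → Fin d) :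
    Subgroup (Equiv.Perm (Vtx d)) where
  carrier := {g | g ∈ G ∧ ∀ n : ℕ, g (raySegment ξ n) = raySegment ξ n}
  one_mem' := ⟨G.one_mem, fun _ => rfl⟩
  mul_mem' := by
    rintro a b ⟨ha, ha2⟩ ⟨hb, hb2⟩
    exact ⟨G.mul_mem ha hb, fun n => by rw [Equiv.Perm.mul_apply, hb2 n, ha2 n]⟩
  inv_mem' := by
    rintro a ⟨ha, ha2⟩
    refine ⟨G.inv_mem ha, fun n => ?_⟩
    conv_lhs => rw [← ha2 n]
    exact Equiv.symm_apply_apply a (raySegment ξ n)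

/-- The rigid stabilizer of a vertex `v` in `G`: elements of `G` fixing every vertex not
having `v` as a prefix. -/
def rist {d : ℕ} (G : Subgroup (Equiv.Perm (Vtx d))) (v : Vtx d) :
    Subgroup (Equiv.Perm (Vtx d)) where
  carrier := {g | g ∈ G ∧ ∀ w : Vtx d, ¬ v <+: w → g w = w}
  one_mem' := ⟨G.one_mem, fun _ _ => rfl⟩
  mul_mem' := by
    rintro a b ⟨ha, ha2⟩ ⟨hb, hb2⟩
    exact ⟨G.mul_mem ha hb, fun w hw => by rw [Equiv.Perm.mul_apply, hb2 w hw, ha2 w hw]⟩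
  inv_mem' := by
    rintro a ⟨ha, ha2⟩
    refine ⟨G.inv_mem ha, fun w hw => ?_⟩
    conv_lhs => rw [← ha2 w hw]
    exact Equiv.symm_apply_apply a w

/-! Sections compose: if `g` fixes level `m` with sections `F u`, and each
`F u` fixes level `l` with sections `k (u ++ x)`, then `g` fixes level `m + l` with sections
`k`. Hence `K^{dᵐ} ≤ ψₘ(K ∩ Stab(m))` and `K^{dˡ} ≤ ψₗ(K ∩ Stab(l))` give
`K^{dᵐ⁺ˡ} ≤ ψₘ₊ₗ(K ∩ Stab(m + l))`, and induction from the branching hypothesis at level `1`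
yields `K^{dⁿ} ≤ ψₙ(Stab_G(n))`. Self-similarity puts `ψₙ(Stab_G(n))` inside `G^{dⁿ}`, where
`K^{dⁿ}` has index `|G : K|^{dⁿ}`. -/

open Subgroup

theorem Subgroup.relIndex_pi_const {P ι : Type*} [Group P] [Fintype ι] (H K : Subgroup P) :
    (pi Set.univ fun _ : ι => H).relIndex (pi Set.univ fun _ : ι => K) =
      H.relIndex K ^ Fintype.card ι := by
  let f : (ι → K) →* (ι → P) := K.subtype.compLeft ι
  have hrange : (⊤ : Subgroup (ι → K)).map f = pi Set.univ fun _ => K := by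
    ext p
    simp only [mem_map, mem_top, true_and, mem_pi, Set.mem_univ, forall_const]
    refine ⟨?_, fun hp => ⟨fun i => ⟨p i, hp i⟩, rfl⟩⟩
    rintro ⟨q, rfl⟩ i
    exact (q i).2
  have hcomap : (pi Set.univ fun _ => H).comap f = pi Set.univ fun _ => H.subgroupOf K := by
    ext p
    simp only [mem_comap, mem_pi, Set.mem_univ, forall_const, mem_subgroupOf]
    rfl
  rw [← hrange, ← relIndex_comap, hcomap, relIndex_top_right, index_pi, Finset.prod_const,
    Finset.card_univ, relIndex]

section Sections

variable {d : ℕ}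

instance (n : ℕ) : Fintype (Level d n) := inferInstanceAs (Fintype (List.Vector (Fin d) n))

def Level.append {m l : ℕ} (u : Level d m) (x : Level d l) : Level d (m + l) :=
  ⟨u.1 ++ x.1, by rw [List.length_append, u.2, x.2]⟩

theorem Level.exists_append_eq {m l : ℕ} (v : Level d (m + l)) :
    ∃ (u : Level d m) (x : Level d l), u.append x = v :=
  ⟨⟨v.1.take m, by simp [v.2]⟩, ⟨v.1.drop m, by simp [v.2]⟩,
    Subtype.ext (List.take_append_drop m v.1)⟩

def FixesLevelWithSections (g : Equiv.Perm (Vtx d)) (n : ℕ)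
    (h : Level d n → Equiv.Perm (Vtx d)) : Prop :=
  (∀ v : Level d n, g v.1 = v.1) ∧ ∀ (v : Level d n) (w : Vtx d), g (v.1 ++ w) = v.1 ++ h v w

theorem FixesLevelWithSections.append {g : Equiv.Perm (Vtx d)} {m l : ℕ}
    {F : Level d m → Equiv.Perm (Vtx d)} {k : Level d (m + l) → Equiv.Perm (Vtx d)}
    (hg : FixesLevelWithSections g m F)
    (hF : ∀ u, FixesLevelWithSections (F u) l fun x => k (u.append x)) :
    FixesLevelWithSections g (m + l) k := by
  refine ⟨fun v => ?_, fun v w => ?_⟩ <;> obtain ⟨u, x, rfl⟩ := Level.exists_append_eq v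
  · calc g (u.1 ++ x.1) = u.1 ++ F u x.1 := hg.2 u x.1
      _ = u.1 ++ x.1 := by rw [(hF u).1 x]
  · calc g (u.1 ++ x.1 ++ w) = u.1 ++ F u (x.1 ++ w) := by rw [List.append_assoc, hg.2]
      _ = u.1 ++ x.1 ++ k (u.append x) w := by rw [(hF u).2 x w, List.append_assoc]

theorem psiImage_mono {H K : Subgroup (Equiv.Perm (Vtx d))} (hHK : H ≤ K) (n : ℕ) :
    psiImage H n ≤ psiImage K n :=
  fun _ ⟨g, hg, hgh⟩ => ⟨g, hHK hg, hgh⟩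

theorem psiImage_le_pi_of_selfSimilar {G : Subgroup (Equiv.Perm (Vtx d))} (hG : SelfSimilar G)
    (n : ℕ) : psiImage G n ≤ pi Set.univ fun _ : Level d n => G := by
  rintro h ⟨g, hg, hfix, hsec⟩ v -
  obtain ⟨s, hs, hgs⟩ := hG g hg v.1
  have hvs : h v = s := Equiv.ext fun w => List.append_cancel_left <| by rw [← hsec, hgs, hfix]
  exact hvs ▸ hs

theorem pi_le_psiImage_zero {K : Subgroup (Equiv.Perm (Vtx d))} (hK : ∀ g ∈ K, g [] = []) :
    pi Set.univ (fun _ : Level d 0 => K) ≤ psiImage K 0 := by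
  intro k hk
  have hv (v : Level d 0) : v = ⟨[], rfl⟩ := Subtype.ext (List.eq_nil_of_length_eq_zero v.2)
  refine ⟨k ⟨[], rfl⟩, hk _ trivial, fun v => ?_, fun v w => ?_⟩ <;> rw [hv v]
  · exact hK _ (hk _ trivial)
  · rfl

theorem pi_le_psiImage_add {K : Subgroup (Equiv.Perm (Vtx d))} {m l : ℕ}
    (hm : pi Set.univ (fun _ : Level d m => K) ≤ psiImage K m)
    (hl : pi Set.univ (fun _ : Level d l => K) ≤ psiImage K l) :
    pi Set.univ (fun _ : Level d (m + l) => K) ≤ psiImage K (m + l) := by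
  intro k hk
  have hbelow (u : Level d m) : ∃ f ∈ K, FixesLevelWithSections f l fun x => k (u.append x) :=
    hl fun x _ => hk (u.append x) trivial
  choose F hFK hF using hbelow
  obtain ⟨g, hgK, hg⟩ := hm fun u _ => hFK u
  exact ⟨g, hgK, FixesLevelWithSections.append hg hF⟩

theorem IsRegularBranch.pi_le_psiImage {G K : Subgroup (Equiv.Perm (Vtx d))}
    (hGK : IsRegularBranch d G K) (n : ℕ) :
    pi Set.univ (fun _ : Level d n => K) ≤ psiImage K n := by
  induction n with
  | zero => exact pi_le_psiImage_zero fun g hg => (hGK.treeAut g (hGK.le hg)).1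
  | succ n ih => exact pi_le_psiImage_add ih hGK.pi_le

end Sections

theorem psiImage_contains_piK_and_finite_index_general {d : ℕ}
    (G K : Subgroup (Equiv.Perm (Vtx d))) (hGK : IsRegularBranch d G K) (n : ℕ) :
    Subgroup.pi Set.univ (fun _ : Level d n => K) ≤ psiImage G n ∧
    psiImage G n ≤ Subgroup.pi Set.univ (fun _ : Level d n => G) ∧
    (psiImage G n).relIndex (Subgroup.pi Set.univ (fun _ : Level d n => G)) ≠ 0 := by
  have hK : pi Set.univ (fun _ : Level d n => K) ≤ psiImage G n :=
    (hGK.pi_le_psiImage n).trans (psiImage_mono hGK.le n)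
  have hKG : (pi Set.univ fun _ : Level d n => K).relIndex (pi Set.univ fun _ => G) ≠ 0 := by
    rw [relIndex_pi_const]
    exact pow_ne_zero _ hGK.relindex_ne_zero
  exact ⟨hK, psiImage_le_pi_of_selfSimilar hGK.selfSimilar n,
    mt (relIndex_eq_zero_of_le_left hK) hKG⟩

/-- In a regular branch group over `K`, for every `n` the image of `Stab_G(n)` under `ψₙ`
contains `K^{dⁿ}` and is a subgroup of finite index in `G^{dⁿ}`. -/
theorem psiImage_contains_piK_and_finite_index {d : ℕ} (hd : 2 ≤ d)
    (G K : Subgroup (Equiv.Perm (Vtx d))) (hGK : IsRegularBranch d G K) (n : ℕ) :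
    Subgroup.pi Set.univ (fun _ : Level d n => K) ≤ psiImage G n ∧
    psiImage G n ≤ Subgroup.pi Set.univ (fun _ : Level d n => G) ∧
    (psiImage G n).relIndex (Subgroup.pi Set.univ (fun _ : Level d n => G)) ≠ 0 :=
  psiImage_contains_piK_and_finite_index_general G K hGK n
end
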